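/- Let δ, δ' ≥ 2 be real numbers. Then for every integer i ≥ 0 and every t ≥ 0: Σ_{k=0}^{i} (Π_{m=i−k+1}^{i} a_m) · B_t(a_i, a_{i−1}, …, a_{i−k}) = 1, where the k = 0 term equals e^{−a_i t} and an empty product equals 1. -/

import Mathlib

open Finset Real

/-- `aC δ δ' n = n (2(n-1) + δ + δ')`. -/
noncomputable def aC (δ δ' : ℝ) (n : ℕ) : ℝ := (n : ℝ) * (2 * ((n : ℝ) - 1) + δ + δ')

/-- `Bt t k b = B_t(b 0, …, b k)`. -/
noncomputable def Bt (t : ℝ) (k : ℕ) (b : ℕ → ℝ) : ℝ :=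
  (-1 : ℝ) ^ k * ∑ j ∈ Finset.range (k + 1),
    (-1 : ℝ) ^ j * Real.exp (-(b j) * t) /
      ∏ l ∈ (Finset.range (k + 1)).erase j, |b j - b l|
/-!
Put `β j = a_(i-j)`, so that `β 0 > ⋯ > β i = 0`. Then `B_t(β 0, …, β k)` is `(-1)^k` times
the divided difference `[β 0, …, β k]` of `x ↦ exp (-x t)`, and
`∏_{m=i-k+1}^{i} a_m = (-1)^k ∏_{j<k} (β i - β j)`. The sum is therefore Newton's interpolation
polynomial of `exp (-x t)` on the nodes `β 0, …, β i`, evaluated at the node `β i = 0`, where it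
is exact: it equals `exp 0 = 1`.
-/

section DividedDifference

variable {K : Type*} [Field K]

def divDiff (β c : ℕ → K) (k : ℕ) : K :=
  ∑ j ∈ range (k + 1), c j / ∏ l ∈ (range (k + 1)).erase j, (β j - β l)

lemma prod_erase_sub_ne_zero {β : ℕ → K} {n m : ℕ} (hβ : Set.InjOn β (Set.Iic n))
    {j : ℕ} (hj : j ≤ n) (hm : m ≤ n + 1) :
    ∏ l ∈ (range m).erase j, (β j - β l) ≠ 0 := by
  refine prod_ne_zero_iff.2 fun l hl => sub_ne_zero.2 fun h => ?_
  obtain ⟨hlj, hl⟩ := mem_erase.1 hl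
  exact hlj (hβ (Set.mem_Iic.2 (by grind)) (Set.mem_Iic.2 hj) h.symm)

/-- The coefficient of `c n` in the Newton sum evaluated at `x`; its partial sums telescope. -/
lemma sum_Icc_prod_sub_div_prod_sub {β : ℕ → K} (x : K) {n m : ℕ} (hnm : n ≤ m)
    (hβ : Set.InjOn β (Set.Iic m)) :
    ∑ k ∈ Icc n m, (∏ j ∈ range k, (x - β j)) / ∏ l ∈ (range (k + 1)).erase n, (β n - β l) =
      (∏ j ∈ (range (m + 1)).erase n, (x - β j)) /
        ∏ l ∈ (range (m + 1)).erase n, (β n - β l) := by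
  induction m, hnm using Nat.le_induction with
  | base => simp [range_add_one, erase_insert notMem_range_self]
  | succ m hnm ih =>
    have hD := prod_erase_sub_ne_zero hβ (m := m + 1) (j := n) (by omega) (by omega)
    have hd : β n - β (m + 1) ≠ 0 :=
      sub_ne_zero.2 fun h => by
        have := hβ (Set.mem_Iic.2 (by omega)) (Set.mem_Iic.2 le_rfl) h; omega
    rw [sum_Icc_succ_top (by omega), ih (hβ.mono (Set.Iic_subset_Iic.2 m.le_succ)),
      range_add_one (n := m + 1), erase_insert_of_ne (by omega), prod_insert (by simp),
      prod_insert (by simp),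
      ← mul_prod_erase (range (m + 1)) _ (mem_range.2 (Nat.lt_succ_of_le hnm))]
    field_simp
    ring

theorem sum_prod_sub_mul_divDiff_eq (β c : ℕ → K) (i : ℕ) (hβ : Set.InjOn β (Set.Iic i)) :
    ∑ k ∈ range (i + 1), (∏ j ∈ range k, (β i - β j)) * divDiff β c k = c i := by
  simp only [divDiff, mul_sum]
  rw [sum_comm' (t' := range (i + 1)) (s' := fun j => Icc j i) (by intro k j; simp; omega)]
  have hinner : ∀ j ∈ range (i + 1),
      ∑ k ∈ Icc j i,
          (∏ l ∈ range k, (β i - β l)) * (c j / ∏ l ∈ (range (k + 1)).erase j, (β j - β l)) =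
        c j * ((∏ l ∈ (range (i + 1)).erase j, (β i - β l)) /
          ∏ l ∈ (range (i + 1)).erase j, (β j - β l)) := by
    intro j hj
    rw [← sum_Icc_prod_sub_div_prod_sub (β i) (mem_range_succ_iff.1 hj) hβ, mul_sum]
    refine sum_congr rfl fun k _ => by ring
  rw [sum_congr rfl hinner, sum_eq_single_of_mem i (self_mem_range_succ i)]
  · rw [div_self (prod_erase_sub_ne_zero hβ le_rfl le_rfl), mul_one]
  · intro j hj hji
    rw [prod_eq_zero (i := i) (by simp [hji.symm]) (sub_self _), zero_div, mul_zero]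

end DividedDifference

lemma prod_erase_abs_sub_eq {b : ℕ → ℝ} {k : ℕ} (hb : StrictAntiOn b (Set.Iic k)) {j : ℕ}
    (hj : j ≤ k) :
    ∏ l ∈ (range (k + 1)).erase j, |b j - b l| =
      (-1) ^ j * ∏ l ∈ (range (k + 1)).erase j, (b j - b l) := by
  have hsplit : (range (k + 1)).erase j = range j ∪ Ico (j + 1) (k + 1) := by
    ext; simp; omega
  have hdisj : Disjoint (range j) (Ico (j + 1) (k + 1)) := by
    simp only [disjoint_left, mem_range, mem_Ico]; omega
  have hbelow : ∏ l ∈ range j, |b j - b l| = ∏ l ∈ range j, -(b j - b l) :=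
    prod_congr rfl fun l hl => abs_of_neg <| sub_neg.2 <|
      hb (Set.mem_Iic.2 (by simp at hl; omega)) (Set.mem_Iic.2 hj) (mem_range.1 hl)
  have habove : ∏ l ∈ Ico (j + 1) (k + 1), |b j - b l| = ∏ l ∈ Ico (j + 1) (k + 1), (b j - b l) :=
    prod_congr rfl fun l hl => abs_of_pos <| sub_pos.2 <| by
      simp only [mem_Ico] at hl
      exact hb (Set.mem_Iic.2 hj) (Set.mem_Iic.2 (by omega)) (by omega)
  rw [hsplit, prod_union hdisj, prod_union hdisj, hbelow, habove, prod_neg, card_range, mul_assoc]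

lemma Bt_eq_neg_one_pow_mul_divDiff (t : ℝ) {k : ℕ} {b : ℕ → ℝ} (hb : StrictAntiOn b (Set.Iic k)) :
    Bt t k b = (-1) ^ k * divDiff b (fun j => exp (-b j * t)) k := by
  refine congrArg _ (sum_congr rfl fun j hj => ?_)
  rw [prod_erase_abs_sub_eq hb (mem_range_succ_iff.1 hj), mul_div_mul_left _ _ (by simp)]

lemma aC_strictMono {δ δ' : ℝ} (h : 0 < δ + δ') : StrictMono (aC δ δ') := by
  intro m n hmn
  have hm : (0 : ℝ) ≤ m := m.cast_nonneg
  have hmn' : (m : ℝ) + 1 ≤ n := by exact_mod_cast hmn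
  have : aC δ δ' n - aC δ δ' m = ((n : ℝ) - m) * (2 * ((n : ℝ) + m - 1) + δ + δ') := by
    unfold aC; ring
  nlinarith

lemma prod_Icc_sub_add_one_eq_prod_range {M : Type*} [CommMonoid M] (f : ℕ → M) {i k : ℕ}
    (hk : k ≤ i) : ∏ m ∈ Icc (i - k + 1) i, f m = ∏ j ∈ range k, f (i - j) :=
  prod_nbij' (fun m => i - m) (fun j => i - j) (by intro m hm; simp at *; omega)
    (by intro j hj; simp at *; omega) (by intro m hm; simp at *; omega)
    (by intro j hj; simp at *; omega) (by intro m hm; simp at hm; congr 1; omega)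

theorem stmt15_general (δ δ' : ℝ) (hδ : 2 ≤ δ) (hδ' : 2 ≤ δ') (i : ℕ) (t : ℝ) :
    ∑ k ∈ Finset.range (i + 1),
        (∏ m ∈ Finset.Icc (i - k + 1) i, aC δ δ' m) * Bt t k (fun j => aC δ δ' (i - j)) = 1 := by
  set β : ℕ → ℝ := fun j => aC δ δ' (i - j)
  have hβ : StrictAntiOn β (Set.Iic i) := fun j hj l hl hjl =>
    aC_strictMono (by linarith) (by simp only [Set.mem_Iic] at hj hl; omega)
  have hβi : β i = 0 := by simp [β, aC]
  calc _ = ∑ k ∈ range (i + 1),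
        (∏ j ∈ range k, (β i - β j)) * divDiff β (fun j => exp (-β j * t)) k := by
        refine sum_congr rfl fun k hk => ?_
        have hki := mem_range_succ_iff.1 hk
        rw [prod_Icc_sub_add_one_eq_prod_range _ hki,
          Bt_eq_neg_one_pow_mul_divDiff t (hβ.mono (Set.Iic_subset_Iic.2 hki)), hβi]
        simp only [zero_sub, prod_neg, card_range]
        ring
    _ = exp (-β i * t) := sum_prod_sub_mul_divDiff_eq _ _ i hβ.injOn
    _ = 1 := by simp [hβi]

theorem stmt15 (δ δ' : ℝ) (hδ : 2 ≤ δ) (hδ' : 2 ≤ δ') (i : ℕ) (t : ℝ) (ht : 0 ≤ t) :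
    ∑ k ∈ Finset.range (i + 1),
        (∏ m ∈ Finset.Icc (i - k + 1) i, aC δ δ' m) * Bt t k (fun j => aC δ δ' (i - j)) = 1 :=
  stmt15_general δ δ' hδ hδ' i t
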